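/- arXiv:2311.02710 — 5 statements merged into one kernel-verified Lean document; each statement's English description precedes it below -/
import Mathlib

section
/- Let p be an odd prime, K = ZMod p, and a, c ∈ K with c ≠ 0. Define d : ℕ → K by d_{-1} = 0 and d_m = d_{m-1} - a - m·c (indices m ≥ 0). Suppose that for all m with 0 ≤ m ≤ p-2, 2a + m•c ≠ 0. Then the least m with d m = 0 is m = p - 1. -/
theorem stmt_2 (p : ℕ) (hp : p.Prime) (hodd : p ≠ 2) (a c : ZMod p) (hc : c ≠ 0)
    (d : ℕ → ZMod p)
    (hd0 : d 0 = -a)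
    (hds : ∀ m : ℕ, d (m + 1) = d m - a - (m + 1) • c)
    (hnz : ∀ m : ℕ, m ≤ p - 2 → 2 * a + m • c ≠ 0) :
    IsLeast {m : ℕ | d m = 0} (p - 1) := by
  haveI : Fact p.Prime := ⟨hp⟩
  have h2 : (2 : ZMod p) ≠ 0 := by
    have : ((2 : ℕ) : ZMod p) ≠ 0 := by
      rw [Ne, ZMod.natCast_eq_zero_iff]
      intro h
      have := Nat.le_of_dvd (by norm_num) h
      have := hp.two_le
      omega
    simpa using this
  have key : ∀ m : ℕ, 2 * d m = -((m : ZMod p) + 1) * (2 * a + (m : ZMod p) * c) := by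
    intro m
    induction m with
    | zero => simp [hd0]
    | succ n ih =>
      rw [hds n, nsmul_eq_mul]
      push_cast
      push_cast at ih
      ring_nf
      ring_nf at ih
      linear_combination ih
  have hp1 : 1 ≤ p := hp.one_lt.le.trans' (by norm_num)
  have hdp : d (p - 1) = 0 := by
    have h := key (p - 1)
    have hc1 : ((p - 1 : ℕ) : ZMod p) + 1 = 0 := by
      have : (((p - 1) + 1 : ℕ) : ZMod p) = 0 := by
        rw [Nat.sub_add_cancel hp1]; simp
      push_cast at this; exact this
    rw [hc1] at h
    simp at h
    rcases h with h | h
    · exact absurd h h2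
    · exact h
  constructor
  · exact hdp
  · intro m hm
    by_contra hlt
    push_neg at hlt
    have hm2 : m ≤ p - 2 := by omega
    have hmlt : m + 1 < p := by omega
    have h := key m
    rw [Set.mem_setOf_eq.mp hm] at h
    simp at h
    have hne1 : ((m : ZMod p) + 1) ≠ 0 := by
      have : ((m + 1 : ℕ) : ZMod p) ≠ 0 := by
        rw [Ne, ZMod.natCast_eq_zero_iff]
        intro hdvd
        exact absurd (Nat.le_of_dvd (by omega) hdvd) (by omega)
      push_cast at this; exact this
    have hne2 := hnz m hm2
    rw [nsmul_eq_mul] at hne2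
    rcases h with h' | h'
    · exact hne1 (by linear_combination -h')
    · exact hne2 h'
end

section
/- Let p be an odd prime, K = ZMod p, and a, c ∈ K with c ≠ 0. Define d : ℕ → K by d_{-1} = 0 and d_m = d_{m-1} - a - m·c for m ≥ 0. Let N = (-2a/c).val ∈ {0, …, p-1} be the canonical representative of -2a/c in ZMod p. Then the least m ∈ ℕ with d m = 0 equals min N (p-1); in particular if N ≤ p - 2 then the least zero is N. -/
/-!
Doubling the recurrence gives the closed form `2 d m = -(m + 1) (2a + m c)`, so for `p` odd
`d m = 0` exactly when `m ≡ -1` or `m ≡ -2a/c (mod p)`. The least natural number in the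
second class is `N = (-2a/c).val ≤ p - 1`, while every `m` in the first class is at least
`p - 1`; hence the least zero is `N = min N (p - 1)`.
-/

section Recurrence

variable {R : Type*} [CommRing R] {a c : R} {d : ℕ → R}

theorem two_mul_eq_of_recurrence (hd0 : d 0 = -a)
    (hds : ∀ m : ℕ, d (m + 1) = d m - a - (m + 1) • c) (m : ℕ) :
    2 * d m = -((m : R) + 1) * (2 * a + m * c) := by
  induction m with
  | zero => simp [hd0]
  | succ n ih =>
    rw [hds n, nsmul_eq_mul]
    push_cast
    linear_combination ih

theorem eq_zero_iff_of_recurrence [IsDomain R] (h2 : (2 : R) ≠ 0) (hd0 : d 0 = -a)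
    (hds : ∀ m : ℕ, d (m + 1) = d m - a - (m + 1) • c) (m : ℕ) :
    d m = 0 ↔ (m : R) + 1 = 0 ∨ 2 * a + m * c = 0 := by
  rw [← mul_eq_zero_iff_left h2, two_mul_eq_of_recurrence hd0 hds, mul_eq_zero, neg_eq_zero]

end Recurrence

namespace ZMod

theorem sub_one_le_of_natCast_add_one_eq_zero {p m : ℕ} (h : (m : ZMod p) + 1 = 0) :
    p - 1 ≤ m := by
  have hdvd : p ∣ m + 1 := (natCast_eq_zero_iff _ p).mp (by exact_mod_cast h)
  have := Nat.le_of_dvd m.succ_pos hdvd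
  omega

theorem val_le_of_natCast_eq {p m : ℕ} {x : ZMod p} (h : (m : ZMod p) = x) : x.val ≤ m := by
  rw [← h, val_natCast]
  exact Nat.mod_le m p

end ZMod

theorem stmt_3 (p : ℕ) [Fact p.Prime] (hodd : p ≠ 2) (a c : ZMod p) (hc : c ≠ 0)
    (d : ℕ → ZMod p)
    (hd0 : d 0 = -a)
    (hds : ∀ m : ℕ, d (m + 1) = d m - a - (m + 1) • c) :
    IsLeast {m : ℕ | d m = 0} (min ((-2 * a / c).val) (p - 1)) := by
  have h2 : (2 : ZMod p) ≠ 0 := Ring.two_ne_zero (by rwa [ZMod.ringChar_zmod_n])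
  have hzero := eq_zero_iff_of_recurrence h2 hd0 hds
  have hN : (-2 * a / c).val ≤ p - 1 := Nat.le_sub_one_of_lt (ZMod.val_lt _)
  rw [min_eq_left hN]
  refine ⟨?_, fun m hm => ?_⟩
  · rw [Set.mem_ofPred_eq, hzero, ZMod.natCast_zmod_val, div_mul_cancel₀ _ hc]
    right
    ring
  · rcases (hzero m).mp hm with h | h
    · exact hN.trans (ZMod.sub_one_le_of_natCast_add_one_eq_zero h)
    · exact ZMod.val_le_of_natCast_eq (eq_div_of_mul_eq hc (by linear_combination h))
end

section
/- Let p be a prime, K = ZMod p, and a, c ∈ K with c ≠ 0. Define d : ℕ → K by d_{-1} = 0 and d_m = a + m·c - d_{m-1} for m ≥ 0. Let N = (-a/c).val ∈ {0, …, p-1}. Then the least m ∈ ℕ with d_m = 0 equals min (2N) (2p - 1). -/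
theorem stmt_8 (p : ℕ) [Fact p.Prime] (a c : ZMod p) (hc : c ≠ 0) (d : ℕ → ZMod p)
    (hd0 : d 0 = a)
    (hds : ∀ m : ℕ, d (m + 1) = a + (m + 1) • c - d m) :
    IsLeast {m : ℕ | d m = 0} (min (2 * (-a / c).val) (2 * p - 1)) := by
  have hp : 1 ≤ p := (Fact.out : p.Prime).one_lt.le
  -- closed form
  have hform : ∀ l : ℕ, d (2 * l) = a + l • c ∧ d (2 * l + 1) = (l + 1) • c := by
    intro l
    induction l with
    | zero =>
      refine ⟨by simpa using hd0, ?_⟩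
      have := hds 0
      simp only [hd0] at this
      simpa using this
    | succ n ih =>
      have h1 : d (2 * (n + 1)) = a + (n + 1) • c := by
        have : 2 * (n + 1) = (2 * n + 1) + 1 := by ring
        rw [this, hds, ih.2]
        simp only [nsmul_eq_mul]
        push_cast
        ring
      refine ⟨h1, ?_⟩
      rw [hds, h1]
      simp only [nsmul_eq_mul]
      push_cast
      ring
  set N := (-a / c).val with hN
  have hNlt : N < p := ZMod.val_lt _
  have hmin : min (2 * N) (2 * p - 1) = 2 * N := by omega
  rw [hmin]
  have hcast : ((N : ZMod p)) = -a / c := by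
    rw [hN, ZMod.natCast_val, ZMod.cast_id]
  constructor
  · show d (2 * N) = 0
    rw [(hform N).1, nsmul_eq_mul, hcast]
    field_simp
    ring
  · intro m hm
    rcases Nat.even_or_odd m with ⟨l, hl⟩ | ⟨l, hl⟩
    · have hdm : d (2 * l) = 0 := by rw [← hm]; congr 1; omega
      rw [(hform l).1, nsmul_eq_mul] at hdm
      have : (l : ZMod p) = -a / c := by
        field_simp
        linear_combination hdm
      have hval : N = l % p := by rw [hN, ← this, ZMod.val_natCast]
      have := Nat.mod_le l p
      omega
    · have hdm : d (2 * l + 1) = 0 := by rw [← hm]; congr 1; omega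
      rw [(hform l).2, nsmul_eq_mul] at hdm
      have hz : ((l + 1 : ℕ) : ZMod p) = 0 := by
        rcases mul_eq_zero.1 hdm with h | h
        · exact_mod_cast h
        · exact absurd h hc
      have hdvd : p ∣ l + 1 := (ZMod.natCast_eq_zero_iff _ _).1 hz
      have := Nat.le_of_dvd (by omega) hdvd
      omega
end

section
/- Let p be a prime and K = ZMod p. For any a, c ∈ K and either sign ε ∈ {1, -1}, define d : ℕ → K by d_{-1} = 0 and d_m = ε·(d_{m-1} - a - m·c) for m ≥ 0. Then there exists m ∈ ℕ with m ≤ 2p - 1 and d_m = 0. In particular the set {m : d_m = 0} is nonempty, so its infimum is finite. -/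
/-!
Multiplying by `ε ^ (m + 1)` telescopes the recurrence (as `ε² = 1`):
`ε ^ (n + 1) * d n = -∑_{m ≤ n} ε ^ m (a + m c)`. Grouping the terms in pairs `2k, 2k + 1`,
the sum over `m < 2p` is `p` times a ring element, hence vanishes in characteristic `p`;
so `d (2p - 1) = 0`.
-/

namespace SignedAffineRecurrence

variable {R : Type*} [CommRing R] {ε : R}

theorem sum_range_two_mul_pow_mul (hε : ε * ε = 1) (a c : R) (n : ℕ) :
    ∑ m ∈ Finset.range (2 * n), ε ^ m * (a + m * c)
      = n * ((1 + ε) * a + ((1 + ε) * (n - 1) + ε) * c) := by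
  induction n with
  | zero => simp
  | succ n ih =>
    have hε2 : ε ^ (2 * n + 1) = ε := by rw [pow_succ, pow_mul, sq, hε, one_pow, one_mul]
    rw [show 2 * (n + 1) = 2 * n + 1 + 1 by ring, Finset.sum_range_succ, Finset.sum_range_succ, ih,
      hε2, pow_mul, sq, hε, one_pow]
    push_cast
    ring

theorem pow_succ_mul_eq_neg_sum {a c : R} {d : ℕ → R} (hε : ε * ε = 1)
    (hd0 : d 0 = ε * (-a)) (hds : ∀ m : ℕ, d (m + 1) = ε * (d m - a - (m + 1) • c))
    (n : ℕ) : ε ^ (n + 1) * d n = -∑ m ∈ Finset.range (n + 1), ε ^ m * (a + m * c) := by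
  induction n with
  | zero => simp [hd0, ← mul_assoc, hε]
  | succ n ih =>
    rw [Finset.sum_range_succ, neg_add, ← ih, hds, nsmul_eq_mul]
    push_cast
    linear_combination (ε ^ (n + 1) * (d n - a - (n + 1) * c)) * hε

theorem eq_zero_at_two_mul_sub_one {p : ℕ} (hp : p ≠ 0) (hpR : (p : R) = 0) {a c : R}
    {d : ℕ → R} (hε : ε * ε = 1) (hd0 : d 0 = ε * (-a))
    (hds : ∀ m : ℕ, d (m + 1) = ε * (d m - a - (m + 1) • c)) :
    d (2 * p - 1) = 0 := by
  have hpow : ε ^ (2 * p) * ε ^ (2 * p) = 1 := by rw [← mul_pow, hε, one_pow]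
  have htel := pow_succ_mul_eq_neg_sum hε hd0 hds (2 * p - 1)
  rw [Nat.sub_add_cancel (by omega), sum_range_two_mul_pow_mul hε, hpR, zero_mul, neg_zero]
    at htel
  calc d (2 * p - 1) = ε ^ (2 * p) * (ε ^ (2 * p) * d (2 * p - 1)) := by
        rw [← mul_assoc, hpow, one_mul]
    _ = 0 := by rw [htel, mul_zero]

end SignedAffineRecurrence

theorem stmt_10 (p : ℕ) (hp : p.Prime) (a c ε : ZMod p)
    (hε : ε = 1 ∨ ε = -1) (d : ℕ → ZMod p)
    (hd0 : d 0 = ε * (-a))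
    (hds : ∀ m : ℕ, d (m + 1) = ε * (d m - a - (m + 1) • c)) :
    ∃ m : ℕ, m ≤ 2 * p - 1 ∧ d m = 0 := by
  have hεε : ε * ε = 1 := by rcases hε with rfl | rfl <;> simp
  exact ⟨2 * p - 1, le_rfl, SignedAffineRecurrence.eq_zero_at_two_mul_sub_one hp.ne_zero
    (ZMod.natCast_self p) hεε hd0 hds⟩
end

section
/- Let K be a field, ε ∈ {1, -1}, and a, c ∈ K. Suppose g is a Lie superalgebra over K graded by an abelian group, with elements e⁺, e⁻, h and a family of nonzero vectors v_0, v_1, …, v_B (B ∈ ℕ) such that: [h, v_m] = (a + m·c)·v_m for all m; [e⁺, v_m] = c⁺_m·v_{m+1} with c⁺_m ≠ 0 for m < B; [e⁻, v_{m+1}] = c⁻_m·v_m with c⁻_m ≠ 0 for m < B; [e⁺, [e⁻, v_0]] = 0; [e⁻, [e⁺, v_B]] = 0; and [h, x] = [e⁺, [e⁻, x]] - ε·[e⁻, [e⁺, x]] for x among the v_m. Define d : ℤ → K by d_{-1} = 0 and d_m = ε·(d_{m-1} - a - m·c). Then c⁺_m·c⁻_m = d_m for all 0 ≤ m < B, and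 d_B = 0, while d_m ≠ 0 for 0 ≤ m < B. -/
/-!
Write `x m = [e⁺, [e⁻, v m]]` and `y m = [e⁻, [e⁺, v m]]`. Inside the string both are
multiples of `v m`: `x (m + 1) = c⁺ₘ c⁻ₘ v (m + 1)` and `y m = c⁺ₘ c⁻ₘ v m`, while `x 0 = 0`
and `y B = 0`. If `x m = d (m - 1) • v m`, the relation `[h, v m] = x m - ε y m` together with
`ε² = 1` forces `y m = ε (d (m - 1) - a - m c) • v m = d m • v m`. Since `v m ≠ 0`, this gives
`c⁺ₘ c⁻ₘ = d m`, hence `x (m + 1) = d m • v (m + 1)`, and the induction runs up to `m = B`,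
where `y B = 0` yields `d B = 0`.
-/

theorem smul_eq_of_smul_eq_sub_smul {R V : Type*} [Ring R] [AddCommGroup V] [Module R V]
    {ε l s : R} {v x y : V} (hε : ε * ε = 1) (hrel : l • v = x - ε • y) (hx : x = s • v) :
    y = (ε * (s - l)) • v := by
  have hεy : ε • y = (s - l) • v := by rw [sub_smul, ← hx, hrel, sub_sub_cancel]
  rw [mul_smul, ← hεy, smul_smul, hε, one_smul]

section RootString

variable {K V : Type*} [Field K] [AddCommGroup V] [Module K V]
  {brkt : V →ₗ[K] V →ₗ[K] V} {ep em h : V} {B : ℕ} {v : ℕ → V} {cp cm : ℕ → K}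

theorem bracket_em_bracket_ep_eq_mul_smul
    (hep : ∀ m : ℕ, m < B → brkt ep (v m) = cp m • v (m + 1))
    (hem : ∀ m : ℕ, m < B → brkt em (v (m + 1)) = cm m • v m) {m : ℕ} (hm : m < B) :
    brkt em (brkt ep (v m)) = (cp m * cm m) • v m := by
  rw [hep m hm, map_smul, hem m hm, smul_smul]

theorem bracket_ep_bracket_em_succ_eq_mul_smul
    (hep : ∀ m : ℕ, m < B → brkt ep (v m) = cp m • v (m + 1))
    (hem : ∀ m : ℕ, m < B → brkt em (v (m + 1)) = cm m • v m) {m : ℕ} (hm : m < B) :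
    brkt ep (brkt em (v (m + 1))) = (cp m * cm m) • v (m + 1) := by
  rw [hem m hm, map_smul, hep m hm, smul_smul, mul_comm]

theorem bracket_em_bracket_ep_eq_of_bracket_ep_bracket_em_eq {ε a c : K} {d : ℤ → K}
    (hε : ε * ε = 1)
    (hh : ∀ m : ℕ, m ≤ B → brkt h (v m) = (a + m • c) • v m)
    (hjacobi : ∀ m : ℕ, m ≤ B →
      brkt h (v m) = brkt ep (brkt em (v m)) - ε • brkt em (brkt ep (v m)))
    (hds : ∀ m : ℤ, 0 ≤ m → d m = ε * (d (m - 1) - a - (m : K) * c))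
    {m : ℕ} (hm : m ≤ B) (hlow : brkt ep (brkt em (v m)) = d (m - 1) • v m) :
    brkt em (brkt ep (v m)) = d m • v m := by
  rw [smul_eq_of_smul_eq_sub_smul hε ((hh m hm).symm.trans (hjacobi m hm)) hlow,
    hds m m.cast_nonneg, Int.cast_natCast, nsmul_eq_mul, sub_add_eq_sub_sub]

theorem bracket_ep_bracket_em_eq_pred_smul {ε a c : K} {d : ℤ → K} (hε : ε * ε = 1)
    (hv : ∀ m : ℕ, m ≤ B → v m ≠ 0)
    (hh : ∀ m : ℕ, m ≤ B → brkt h (v m) = (a + m • c) • v m)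
    (hep : ∀ m : ℕ, m < B → brkt ep (v m) = cp m • v (m + 1))
    (hem : ∀ m : ℕ, m < B → brkt em (v (m + 1)) = cm m • v m)
    (hbot : brkt ep (brkt em (v 0)) = 0)
    (hjacobi : ∀ m : ℕ, m ≤ B →
      brkt h (v m) = brkt ep (brkt em (v m)) - ε • brkt em (brkt ep (v m)))
    (hdm1 : d (-1) = 0)
    (hds : ∀ m : ℤ, 0 ≤ m → d m = ε * (d (m - 1) - a - (m : K) * c)) :
    ∀ m : ℕ, m ≤ B → brkt ep (brkt em (v m)) = d (m - 1) • v m := by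
  intro m
  induction m with
  | zero => intro _; rw [hbot, Nat.cast_zero, zero_sub, hdm1, zero_smul]
  | succ m ih =>
    intro hm
    have hmB : m < B := Nat.lt_of_succ_le hm
    have hup := bracket_em_bracket_ep_eq_of_bracket_ep_bracket_em_eq hε hh hjacobi hds
      hmB.le (ih hmB.le)
    have hprod : cp m * cm m = d m := smul_left_injective K (hv m hmB.le)
      ((bracket_em_bracket_ep_eq_mul_smul hep hem hmB).symm.trans hup)
    rw [bracket_ep_bracket_em_succ_eq_mul_smul hep hem hmB, hprod, Nat.cast_succ,
      add_sub_cancel_right]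

end RootString

/-- Abstract setting for a root string in a graded Lie superalgebra: a `K`-module `V`
with a bilinear bracket, Chevalley elements `e⁺, e⁻, h`, and a string of nonzero
vectors `v 0, …, v B`. -/
theorem stmt_17 (K : Type*) [Field K] (ε a c : K) (hε : ε = 1 ∨ ε = -1)
    (V : Type*) [AddCommGroup V] [Module K V]
    (brkt : V →ₗ[K] V →ₗ[K] V)
    (ep em h : V) (B : ℕ) (v : ℕ → V) (cp cm : ℕ → K)
    (hv : ∀ m : ℕ, m ≤ B → v m ≠ 0)
    (hh : ∀ m : ℕ, m ≤ B → brkt h (v m) = (a + m • c) • v m)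
    (hep : ∀ m : ℕ, m < B → brkt ep (v m) = cp m • v (m + 1))
    (hcp : ∀ m : ℕ, m < B → cp m ≠ 0)
    (hem : ∀ m : ℕ, m < B → brkt em (v (m + 1)) = cm m • v m)
    (hcm : ∀ m : ℕ, m < B → cm m ≠ 0)
    (hbot : brkt ep (brkt em (v 0)) = 0)
    (htop : brkt em (brkt ep (v B)) = 0)
    (hjacobi : ∀ m : ℕ, m ≤ B →
      brkt h (v m) = brkt ep (brkt em (v m)) - ε • brkt em (brkt ep (v m)))
    (d : ℤ → K)
    (hdm1 : d (-1) = 0)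
    (hds : ∀ m : ℤ, 0 ≤ m → d m = ε * (d (m - 1) - a - (m : K) * c)) :
    (∀ m : ℕ, m < B → cp m * cm m = d m) ∧ d B = 0 ∧
      ∀ m : ℕ, m < B → d m ≠ 0 := by
  have hε2 : ε * ε = 1 := by rcases hε with rfl | rfl <;> norm_num
  have hup (m : ℕ) (hm : m ≤ B) : brkt em (brkt ep (v m)) = d m • v m :=
    bracket_em_bracket_ep_eq_of_bracket_ep_bracket_em_eq hε2 hh hjacobi hds hm
      (bracket_ep_bracket_em_eq_pred_smul hε2 hv hh hep hem hbot hjacobi hdm1 hds m hm)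
  have hprod (m : ℕ) (hm : m < B) : cp m * cm m = d m :=
    smul_left_injective K (hv m hm.le)
      ((bracket_em_bracket_ep_eq_mul_smul hep hem hm).symm.trans (hup m hm.le))
  refine ⟨hprod, ?_, fun m hm => hprod m hm ▸ mul_ne_zero (hcp m hm) (hcm m hm)⟩
  have htopB : (0 : K) • v B = d B • v B := by rw [zero_smul, ← htop, hup B le_rfl]
  exact (smul_left_injective K (hv B le_rfl) htopB).symm
end
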